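/- For α,β ∈ (0,1) with π₁ = β/(α+β) and π₀ = α/(α+β), the inequality h(π₁) ≥ π₁h(α) + π₀h(β) holds whenever α+β ≤ 1, with equality if and only if α+β = 1. (Here h is the binary entropy function.) -/
import Mathlib


/-- Binary entropy function (base 2). -/
noncomputable def binEnt (x : ℝ) : ℝ := -x * Real.logb 2 x - (1 - x) * Real.logb 2 (1 - x)

lemma binEnt_eq (x : ℝ) : binEnt x = Real.binEntropy x / Real.log 2 := by
  simp only [binEnt, Real.binEntropy, Real.logb, Real.log_inv]
  ring

lemma binEnt_symm (x : ℝ) : binEnt (1 - x) = binEnt x := by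
  simp only [binEnt, sub_sub_cancel]
  ring

/-- For `α, β ∈ (0,1)` with `α + β ≤ 1`, `h(π₁) ≥ π₁ h(α) + π₀ h(β)` where
`π₁ = β/(α+β)` and `π₀ = α/(α+β)`, with equality iff `α + β = 1`. -/
theorem binEnt_stationary_ge (α β : ℝ)
    (hα : 0 < α) (hα1 : α < 1) (hβ : 0 < β) (hβ1 : β < 1) (hsum : α + β ≤ 1) :
    (β / (α + β)) * binEnt α + (α / (α + β)) * binEnt β ≤ binEnt (β / (α + β)) ∧
    (binEnt (β / (α + β)) = (β / (α + β)) * binEnt α + (α / (α + β)) * binEnt β ↔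
      α + β = 1) := by
  have hs : 0 < α + β := by linarith
  rcases eq_or_lt_of_le hsum with hc | hc
  · -- equality case α + β = 1
    have hβα : β = 1 - α := by linarith
    have hπ : β / (α + β) = β := by rw [hc, div_one]
    have hab : binEnt α = binEnt β := by rw [hβα, binEnt_symm]
    have heq : binEnt (β / (α + β)) = (β / (α + β)) * binEnt α + (α / (α + β)) * binEnt β := by
      rw [hπ, hc, hab]; field_simp; linear_combination -binEnt β * hc
    exact ⟨le_of_eq heq.symm, ⟨fun _ => hc, fun _ => heq⟩⟩
  · -- strict case α + β < 1
    have hxy : (1 - α : ℝ) ≠ β := by intro h; linarith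
    have hxmem : (1 - α : ℝ) ∈ Set.Icc (0:ℝ) 1 := ⟨by linarith, by linarith⟩
    have hymem : (β : ℝ) ∈ Set.Icc (0:ℝ) 1 := ⟨by linarith, by linarith⟩
    have ha : 0 < β / (α + β) := div_pos hβ hs
    have hb : 0 < α / (α + β) := div_pos hα hs
    have habs : β / (α + β) + α / (α + β) = 1 := by field_simp; ring
    have hkey := Real.strictConcave_binEntropy.2 hxmem hymem hxy ha hb habs
    have hcomb : (β / (α + β)) • (1 - α) + (α / (α + β)) • β = β / (α + β) := by
      simp only [smul_eq_mul]
      field_simp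
      ring
    rw [hcomb] at hkey
    simp only [smul_eq_mul] at hkey
    have hlog2 : (0:ℝ) < Real.log 2 := Real.log_pos (by norm_num)
    have hli : (0:ℝ) < (Real.log 2)⁻¹ := inv_pos.mpr hlog2
    have hkey' := mul_lt_mul_of_pos_right hkey hli
    have e1 : binEnt α = Real.binEntropy (1 - α) * (Real.log 2)⁻¹ := by
      rw [← binEnt_symm, binEnt_eq, div_eq_mul_inv]
    have e2 : binEnt β = Real.binEntropy β * (Real.log 2)⁻¹ := by
      rw [binEnt_eq, div_eq_mul_inv]
    have e3 : binEnt (β / (α + β)) = Real.binEntropy (β / (α + β)) * (Real.log 2)⁻¹ := by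
      rw [binEnt_eq, div_eq_mul_inv]
    have hstrict : (β / (α + β)) * binEnt α + (α / (α + β)) * binEnt β
        < binEnt (β / (α + β)) := by
      rw [e1, e2, e3]
      calc β / (α + β) * (Real.binEntropy (1 - α) * (Real.log 2)⁻¹)
            + α / (α + β) * (Real.binEntropy β * (Real.log 2)⁻¹)
          = (β / (α + β) * Real.binEntropy (1 - α)
            + α / (α + β) * Real.binEntropy β) * (Real.log 2)⁻¹ := by ring
        _ < Real.binEntropy (β / (α + β)) * (Real.log 2)⁻¹ := hkey'
    exact ⟨le_of_lt hstrict, ⟨fun h => absurd h hstrict.ne', fun h => absurd h hc.ne⟩⟩
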